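/- Let n ≥ 1 and N ≥ 1, let Y ∈ ℝⁿ, let X be a real n × N matrix, and let ρ ≥ 0. Define the robust objective f(α) = sup { ‖(Y + ΔY) − (X + ΔX)α‖₂ : ‖ΔY‖₂ ≤ ρ, ‖ΔX‖ ≤ ρ } and the Ridge objective g(α) = ‖Y − Xα‖₂ + ρ‖α‖₂ for α ∈ ℝᴺ. Then a vector α⋆ ∈ ℝᴺ is a global minimizer of f if and only if it is a global minimizer of g; that is, the min–max robust least-squares problem is equivalent to the Ridge regression problem with regularization parameter λ₂ = ρ. -/

import Mathlib

/-!
Perturbing the data by `ΔY` and `ΔX` moves the residual `Y - Xα` by `ΔY - ΔX α`, whose norm is at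
most `ρ + ρ‖α‖`; the bound is attained by pushing both perturbations in the direction of the
residual, with `ΔX` a rank-one map built from a norming functional of `α`. Hence the robust
objective is the Ridge objective plus the constant `ρ`, and the two have the same minimizers.
-/

/-- The operator norm of a real `n × N` matrix viewed as a linear map
`ℝᴺ → ℝⁿ` with Euclidean norms on domain and codomain. -/
noncomputable def matOpNorm {n N : ℕ} (M : Matrix (Fin n) (Fin N) ℝ) : ℝ :=
  ‖LinearMap.toContinuousLinearMap (Matrix.toEuclideanLin M)‖

section WorstCasePerturbation

variable {E F : Type*} [NormedAddCommGroup E] [NormedSpace ℝ E]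
  [NormedAddCommGroup F] [NormedSpace ℝ F]

theorem norm_add_sub_apply_le {ρ : ℝ} {ΔY : F} {ΔA : E →L[ℝ] F} (hΔY : ‖ΔY‖ ≤ ρ)
    (hΔA : ‖ΔA‖ ≤ ρ) (w : F) (α : E) :
    ‖w + ΔY - ΔA α‖ ≤ ‖w‖ + ρ * ‖α‖ + ρ :=
  calc ‖w + ΔY - ΔA α‖ ≤ ‖w‖ + ‖ΔY‖ + ‖ΔA α‖ := norm_sub_le_of_le (norm_add_le _ _) le_rfl
    _ ≤ ‖w‖ + ρ + ρ * ‖α‖ := by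
      gcongr
      exact ΔA.le_of_opNorm_le hΔA α
    _ = ‖w‖ + ρ * ‖α‖ + ρ := by ring

theorem exists_norm_eq_one_smul_eq [Nontrivial F] (w : F) : ∃ u : F, ‖u‖ = 1 ∧ ‖w‖ • u = w := by
  rcases eq_or_ne w 0 with rfl | hw
  · obtain ⟨u, hu⟩ := exists_norm_eq F zero_le_one
    exact ⟨u, hu, by simp⟩
  · exact ⟨‖w‖⁻¹ • w, norm_smul_inv_norm hw, by simp [smul_smul, hw]⟩

theorem exists_norm_add_sub_apply_eq [Nontrivial F] {ρ : ℝ} (hρ : 0 ≤ ρ) (w : F) (α : E) :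
    ∃ (ΔY : F) (ΔA : E →L[ℝ] F), ‖ΔY‖ ≤ ρ ∧ ‖ΔA‖ ≤ ρ ∧
      ‖w + ΔY - ΔA α‖ = ‖w‖ + ρ * ‖α‖ + ρ := by
  obtain ⟨u, hu, hwu⟩ := exists_norm_eq_one_smul_eq w
  obtain ⟨φ, hφ, hφα⟩ := exists_dual_vector'' ℝ α
  refine ⟨ρ • u, -(ρ • φ.smulRight u), ?_, ?_, ?_⟩
  · simp [norm_smul, hu, abs_of_nonneg hρ]
  · rw [norm_neg, norm_smul, ContinuousLinearMap.norm_smulRight_apply, hu, mul_one,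
      Real.norm_of_nonneg hρ]
    exact mul_le_of_le_one_right hρ hφ
  · have : w + ρ • u - (-(ρ • φ.smulRight u)) α = (‖w‖ + ρ * ‖α‖ + ρ) • u := by
      nth_rw 1 [← hwu]
      simp only [neg_apply, smul_apply, ContinuousLinearMap.smulRight_apply, hφα,
        RCLike.ofReal_real_eq_id, id]
      module
    rw [this, norm_smul, hu, mul_one, Real.norm_of_nonneg (by positivity)]

end WorstCasePerturbation

theorem matOpNorm_symm_toEuclideanLin {n N : ℕ}
    (T : EuclideanSpace ℝ (Fin N) →L[ℝ] EuclideanSpace ℝ (Fin n)) :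
    matOpNorm (Matrix.toEuclideanLin.symm T.toLinearMap) = ‖T‖ := by
  rw [matOpNorm, LinearEquiv.apply_symm_apply]
  exact congrArg norm (LinearMap.toContinuousLinearMap.apply_symm_apply T)

theorem sSup_robust_residual_eq {n N : ℕ} [NeZero n]
    (Y : EuclideanSpace ℝ (Fin n)) (X : Matrix (Fin n) (Fin N) ℝ)
    {ρ : ℝ} (hρ : 0 ≤ ρ) (α : EuclideanSpace ℝ (Fin N)) :
    sSup { r : ℝ |
        ∃ (ΔY : EuclideanSpace ℝ (Fin n)) (ΔX : Matrix (Fin n) (Fin N) ℝ),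
          ‖ΔY‖ ≤ ρ ∧ matOpNorm ΔX ≤ ρ ∧
          r = ‖(Y + ΔY) - Matrix.toEuclideanLin (X + ΔX) α‖ }
      = ‖Y - Matrix.toEuclideanLin X α‖ + ρ * ‖α‖ + ρ := by
  have residual : ∀ (ΔY : EuclideanSpace ℝ (Fin n)) (ΔX : Matrix (Fin n) (Fin N) ℝ),
      (Y + ΔY) - Matrix.toEuclideanLin (X + ΔX) α
        = (Y - Matrix.toEuclideanLin X α) + ΔY - Matrix.toEuclideanLin ΔX α := by
    intro ΔY ΔX
    rw [map_add, LinearMap.add_apply]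
    abel
  refine IsGreatest.csSup_eq ⟨?_, ?_⟩
  · obtain ⟨ΔY, ΔA, hΔY, hΔA, heq⟩ :=
      exists_norm_add_sub_apply_eq hρ (Y - Matrix.toEuclideanLin X α) α
    refine ⟨ΔY, Matrix.toEuclideanLin.symm ΔA.toLinearMap, hΔY,
      (matOpNorm_symm_toEuclideanLin ΔA).trans_le hΔA, ?_⟩
    rw [residual, LinearEquiv.apply_symm_apply, ContinuousLinearMap.coe_coe, heq]
  · rintro r ⟨ΔY, ΔX, hΔY, hΔX, rfl⟩
    rw [residual]
    exact norm_add_sub_apply_le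
      (ΔA := LinearMap.toContinuousLinearMap (Matrix.toEuclideanLin ΔX)) hΔY hΔX _ α

theorem robust_min_max_iff_ridge_general {n N : ℕ} (hn : 1 ≤ n)
    (Y : EuclideanSpace ℝ (Fin n)) (X : Matrix (Fin n) (Fin N) ℝ)
    (ρ : ℝ) (hρ : 0 ≤ ρ)
    (f g : EuclideanSpace ℝ (Fin N) → ℝ)
    (hf : ∀ α, f α = sSup { r : ℝ |
        ∃ (ΔY : EuclideanSpace ℝ (Fin n)) (ΔX : Matrix (Fin n) (Fin N) ℝ),
          ‖ΔY‖ ≤ ρ ∧ matOpNorm ΔX ≤ ρ ∧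
          r = ‖(Y + ΔY) - Matrix.toEuclideanLin (X + ΔX) α‖ })
    (hg : ∀ α, g α = ‖Y - Matrix.toEuclideanLin X α‖ + ρ * ‖α‖)
    (αstar : EuclideanSpace ℝ (Fin N)) :
    (∀ α, f αstar ≤ f α) ↔ (∀ α, g αstar ≤ g α) := by
  have : NeZero n := ⟨by omega⟩
  have hfg : ∀ α, f α = g α + ρ := fun α => by
    rw [hf, hg, sSup_robust_residual_eq Y X hρ α]
  simp only [hfg, add_le_add_iff_right]

/-- The min–max robust least-squares problem is equivalent to Ridge regression with
regularization parameter `λ₂ = ρ`: a vector is a global minimizer of the robust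
objective iff it is a global minimizer of the Ridge objective. -/
theorem robust_min_max_iff_ridge {n N : ℕ} (hn : 1 ≤ n) (hN : 1 ≤ N)
    (Y : EuclideanSpace ℝ (Fin n)) (X : Matrix (Fin n) (Fin N) ℝ)
    (ρ : ℝ) (hρ : 0 ≤ ρ)
    (f g : EuclideanSpace ℝ (Fin N) → ℝ)
    (hf : ∀ α, f α = sSup { r : ℝ |
        ∃ (ΔY : EuclideanSpace ℝ (Fin n)) (ΔX : Matrix (Fin n) (Fin N) ℝ),
          ‖ΔY‖ ≤ ρ ∧ matOpNorm ΔX ≤ ρ ∧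
          r = ‖(Y + ΔY) - Matrix.toEuclideanLin (X + ΔX) α‖ })
    (hg : ∀ α, g α = ‖Y - Matrix.toEuclideanLin X α‖ + ρ * ‖α‖)
    (αstar : EuclideanSpace ℝ (Fin N)) :
    (∀ α, f αstar ≤ f α) ↔ (∀ α, g αstar ≤ g α) :=
  robust_min_max_iff_ridge_general hn Y X ρ hρ f g hf hg αstar
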